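/- For n ≥ 3, the Stanley–Pitman fan construction yields exactly c_{n−2} = (1/(n−1))·binomial(2(n−2), n−2) maximal cones in R^{n−3}, one for each plane binary tree with n−1 leaves, and each maximal cone is simplicial (cut out by exactly n−3 linearly independent inequalities). -/

import Mathlib

/-- A plane binary tree: every vertex has either two ordered children or none. -/
inductive PlaneBinaryTree : Type
  | leaf : PlaneBinaryTree
  | node : PlaneBinaryTree → PlaneBinaryTree → PlaneBinaryTree

namespace PlaneBinaryTree

/-- The number of leaves. -/
def leaves : PlaneBinaryTree → ℕ
  | .leaf => 1
  | .node l r => l.leaves + r.leaves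

/-- The number of internal vertices. -/
def ic : PlaneBinaryTree → ℕ
  | .leaf => 0
  | .node l r => l.ic + r.ic + 1

/-- The label of the root of a tree whose internal vertices are labeled
`o+1, …, o+ic` in the order of the first time one drops down to them from a
child in a left-to-right depth-first search (i.e. in in-order). -/
def rootLab : PlaneBinaryTree → ℕ → ℕ
  | .leaf, o => o
  | .node l _, o => o + l.ic + 1

/-- The set of parent-child pairs `(i, j)` of labels of internal vertices,
where `i` is the label of the parent and `j` that of the child, for the
labeling of internal vertices by `o+1, …, o+ic` in in-order. -/
def pairs : PlaneBinaryTree → ℕ → Finset (ℕ × ℕ)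
  | .leaf, _ => ∅
  | .node l r, o =>
      pairs l o ∪ pairs r (o + l.ic + 1) ∪
        (match l with
          | .leaf => ∅
          | .node l₁ l₂ => {(o + l.ic + 1, rootLab (PlaneBinaryTree.node l₁ l₂) o)}) ∪
        (match r with
          | .leaf => ∅
          | .node r₁ r₂ => {(o + l.ic + 1, rootLab (PlaneBinaryTree.node r₁ r₂) (o + l.ic + 1))})

end PlaneBinaryTree

/-- The `t`-th coordinate (`1`-indexed) of a point of `ℝ^{n-3}`. -/
def coord {m : ℕ} (x : Fin m → ℝ) (t : ℕ) : ℝ :=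
  if h : t - 1 < m then x ⟨t - 1, h⟩ else 0

/-- The Stanley–Pitman cone `C_T ⊆ ℝ^{n-3}` of a plane binary tree `T` with
`n−1` leaves: for each parent-child pair `(i,j)` of internal vertices, impose
`x_i + ⋯ + x_{j-1} ≥ 0` if `i < j` and `x_j + ⋯ + x_{i-1} ≤ 0` if `i > j`. -/
def spCone (n : ℕ) (T : PlaneBinaryTree) : Set (Fin (n - 3) → ℝ) :=
  {x | ∀ p ∈ T.pairs 0,
    if p.1 < p.2 then 0 ≤ ∑ t ∈ Finset.Icc p.1 (p.2 - 1), coord x t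
    else ∑ t ∈ Finset.Icc p.2 (p.1 - 1), coord x t ≤ 0}

/-!
Plane binary trees with `m + 1` leaves are binary trees with `m` internal nodes, which are
counted by the Catalan number `c_m`.

For simpliciality, label the internal vertices in in-order, so that those of every subtree form
a block of consecutive labels. At a root labeled `k`, the intervals of the edges inside the left
subtree end before `k - 1` and those inside the right subtree start after `k`; the edge to the
left child is the only one whose interval contains `k - 1`, and the edge to the right child the
only remaining one whose interval contains `k`. Induction on the tree shows that the indicator
vectors are linearly independent, and the same disjointness counts the `ic - 1` edges.
-/

section LinearIndepOnUnion

variable {K ι α : Type*} [DivisionRing K] {v : α → ι → K} {s t : Set α}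

theorem LinearIndepOn.union_of_apply_eq_zero (hs : LinearIndepOn K v s)
    (ht : LinearIndepOn K v t) (S : Set ι) (hsS : ∀ a ∈ s, ∀ x ∉ S, v a x = 0)
    (htS : ∀ a ∈ t, ∀ x ∈ S, v a x = 0) : LinearIndepOn K v (s ∪ t) := by
  refine hs.union ht ?_
  have hs_le : Submodule.span K (v '' s) ≤ Submodule.pi Sᶜ fun _ => ⊥ :=
    Submodule.span_le.2 <| Set.image_subset_iff.2 fun a ha =>
      Submodule.mem_pi.2 fun x hx => hsS a ha x hx
  have ht_le : Submodule.span K (v '' t) ≤ Submodule.pi S fun _ => ⊥ :=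
    Submodule.span_le.2 <| Set.image_subset_iff.2 fun a ha =>
      Submodule.mem_pi.2 fun x hx => htS a ha x hx
  refine Submodule.disjoint_def.2 fun y hys hyt => funext fun x => ?_
  by_cases hx : x ∈ S
  · exact Submodule.mem_pi.1 (ht_le hyt) x hx
  · exact Submodule.mem_pi.1 (hs_le hys) x hx

theorem LinearIndepOn.union_of_subsingleton (hs : LinearIndepOn K v s) (ht : t.Subsingleton)
    (x : ι) (htx : ∀ a ∈ t, v a x ≠ 0) (hsx : ∀ a ∈ s, v a x = 0) :
    LinearIndepOn K v (s ∪ t) := by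
  rcases ht.eq_empty_or_singleton with rfl | ⟨a, rfl⟩
  · simpa
  rw [Set.union_singleton]
  refine hs.insert fun ha => htx a rfl ?_
  have : Submodule.span K (v '' s) ≤ LinearMap.ker (LinearMap.proj x) :=
    Submodule.span_le.2 <| Set.image_subset_iff.2 fun b hb => hsx b hb
  exact this ha

end LinearIndepOnUnion

namespace PlaneBinaryTree

theorem leaves_eq_ic_add_one (T : PlaneBinaryTree) : T.leaves = T.ic + 1 := by
  induction T with
  | leaf => rfl
  | node l r ihl ihr => simp only [leaves, ic, ihl, ihr]; omega

def toBinaryTree : PlaneBinaryTree → BinaryTree Unit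
  | .leaf => .nil
  | .node l r => .node () l.toBinaryTree r.toBinaryTree

def ofBinaryTree : BinaryTree Unit → PlaneBinaryTree
  | .nil => .leaf
  | .node _ l r => .node (ofBinaryTree l) (ofBinaryTree r)

def equivBinaryTree : PlaneBinaryTree ≃ BinaryTree Unit where
  toFun := toBinaryTree
  invFun := ofBinaryTree
  left_inv T := by
    induction T with
    | leaf => rfl
    | node l r ihl ihr => simp [toBinaryTree, ofBinaryTree, ihl, ihr]
  right_inv t := by
    induction t with
    | nil => rfl
    | node _ l r ihl ihr => simp [toBinaryTree, ofBinaryTree, ihl, ihr]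

theorem numNodes_toBinaryTree (T : PlaneBinaryTree) : T.toBinaryTree.numNodes = T.ic := by
  induction T with
  | leaf => rfl
  | node l r ihl ihr => simp [toBinaryTree, BinaryTree.numNodes, ic, ihl, ihr]

theorem card_leaves_eq_catalan (m : ℕ) :
    Nat.card {T : PlaneBinaryTree // T.leaves = m + 1} = catalan m := by
  have e : {T : PlaneBinaryTree // T.leaves = m + 1} ≃
      {t : BinaryTree Unit // t ∈ BinaryTree.treesOfNumNodesEq m} :=
    equivBinaryTree.subtypeEquiv fun T => by
      rw [BinaryTree.mem_treesOfNumNodesEq, leaves_eq_ic_add_one]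
      change _ ↔ T.toBinaryTree.numNodes = m
      rw [numNodes_toBinaryTree]
      omega
  rw [Nat.card_congr e, Nat.card_eq_finsetCard, BinaryTree.treesOfNumNodesEq_card_eq_catalan]

def edgeToRoot (k : ℕ) : PlaneBinaryTree → ℕ → Finset (ℕ × ℕ)
  | .leaf, _ => ∅
  | .node a b, o => {(k, rootLab (.node a b) o)}

theorem pairs_node (l r : PlaneBinaryTree) (o : ℕ) :
    pairs (.node l r) o =
      l.pairs o ∪ r.pairs (o + l.ic + 1) ∪ edgeToRoot (o + l.ic + 1) l o ∪
        edgeToRoot (o + l.ic + 1) r (o + l.ic + 1) := by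
  cases l <;> cases r <;> rfl

theorem card_edgeToRoot (k : ℕ) (T : PlaneBinaryTree) (o : ℕ) :
    (edgeToRoot k T o).card = min T.ic 1 := by
  cases T <;> simp [edgeToRoot, ic]

theorem subsingleton_edgeToRoot (k : ℕ) (T : PlaneBinaryTree) (o : ℕ) :
    (edgeToRoot k T o : Set (ℕ × ℕ)).Subsingleton := by
  cases T <;> simp [edgeToRoot]

theorem bounds_of_mem_edgeToRoot {k o : ℕ} {T : PlaneBinaryTree} {p : ℕ × ℕ}
    (hp : p ∈ edgeToRoot k T o) : p.1 = k ∧ o + 1 ≤ p.2 ∧ p.2 ≤ o + T.ic := by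
  cases T with
  | leaf => simp [edgeToRoot] at hp
  | node a b =>
    rw [edgeToRoot, Finset.mem_singleton] at hp
    subst hp
    simp [rootLab, ic]

theorem bounds_of_mem_pairs {T : PlaneBinaryTree} {o : ℕ} {p : ℕ × ℕ} (hp : p ∈ T.pairs o) :
    o + 1 ≤ p.1 ∧ p.1 ≤ o + T.ic ∧ o + 1 ≤ p.2 ∧ p.2 ≤ o + T.ic := by
  induction T generalizing o with
  | leaf => simp [pairs] at hp
  | node l r ihl ihr =>
    simp only [pairs_node, Finset.mem_union] at hp
    simp only [ic]
    rcases hp with ((hp | hp) | hp) | hp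
    · have := ihl hp; omega
    · have := ihr hp; omega
    · have := bounds_of_mem_edgeToRoot hp; omega
    · have := bounds_of_mem_edgeToRoot hp; omega

theorem card_pairs (T : PlaneBinaryTree) (o : ℕ) : (T.pairs o).card = T.ic - 1 := by
  induction T generalizing o with
  | leaf => rfl
  | node l r ihl ihr =>
    set k := o + l.ic + 1
    have hA : ∀ p ∈ l.pairs o, p.1 < k := fun p hp => by
      have := bounds_of_mem_pairs hp; omega
    have hB : ∀ p ∈ r.pairs k, k < p.1 := fun p hp => by
      have := bounds_of_mem_pairs hp; omega
    have hl : ∀ p ∈ edgeToRoot k l o, p.1 = k ∧ p.2 < k := fun p hp => by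
      have := bounds_of_mem_edgeToRoot hp; omega
    have hr : ∀ p ∈ edgeToRoot k r k, p.1 = k ∧ k < p.2 := fun p hp => by
      have := bounds_of_mem_edgeToRoot hp; omega
    rw [pairs_node, Finset.card_union_of_disjoint, Finset.card_union_of_disjoint,
      Finset.card_union_of_disjoint, ihl, ihr, card_edgeToRoot, card_edgeToRoot]
    · simp only [ic]; omega
    all_goals
      exact Finset.disjoint_left.2 fun p hp hq => by grind

section IntervalVec

variable (K : Type*) [DivisionRing K]

/-- The coefficient vector of the inequality contributed by the edge `(i, j)`. -/
def intervalVec (p : ℕ × ℕ) (x : ℕ) : K :=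
  if min p.1 p.2 ≤ x ∧ x < max p.1 p.2 then 1 else 0

variable {K}

theorem intervalVec_eq_zero_of_mem_pairs {T : PlaneBinaryTree} {o : ℕ} {p : ℕ × ℕ}
    (hp : p ∈ T.pairs o) {x : ℕ} (hx : x ≤ o ∨ o + T.ic ≤ x) : intervalVec K p x = 0 := by
  have := bounds_of_mem_pairs hp
  rw [intervalVec, if_neg (by omega)]

theorem linearIndepOn_intervalVec_pairs (T : PlaneBinaryTree) (o : ℕ) :
    LinearIndepOn K (intervalVec K) (T.pairs o : Set (ℕ × ℕ)) := by
  induction T generalizing o with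
  | leaf => simp [pairs]
  | node l r ihl ihr =>
    set k := o + l.ic + 1
    have hA : ∀ p ∈ l.pairs o, ∀ x, o + l.ic ≤ x → intervalVec K p x = 0 :=
      fun p hp x hx => intervalVec_eq_zero_of_mem_pairs hp (by omega)
    have hB : ∀ p ∈ r.pairs k, ∀ x ≤ k, intervalVec K p x = 0 :=
      fun p hp x hx => intervalVec_eq_zero_of_mem_pairs hp (by omega)
    rw [pairs_node]
    push_cast
    refine ((((ihl o).union_of_apply_eq_zero (ihr k) (Set.Iio k) ?_ ?_).union_of_subsingleton
      (subsingleton_edgeToRoot k l o) (k - 1) ?_ ?_).union_of_subsingleton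
      (subsingleton_edgeToRoot k r k) k ?_ ?_)
    · exact fun p hp x hx => hA p hp x (by rw [Set.mem_Iio, not_lt] at hx; omega)
    · exact fun p hp x hx => hB p hp x (by rw [Set.mem_Iio] at hx; omega)
    · intro p hp
      have := bounds_of_mem_edgeToRoot hp
      rw [intervalVec, if_pos (by omega)]
      exact one_ne_zero
    · rintro p (hp | hp)
      · exact hA p hp _ (by omega)
      · exact hB p hp _ (by omega)
    · intro p hp
      have := bounds_of_mem_edgeToRoot hp
      rw [intervalVec, if_pos (by omega)]
      exact one_ne_zero
    · rintro p ((hp | hp) | hp)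
      · exact hA p hp _ (by omega)
      · exact hB p hp _ le_rfl
      · have := bounds_of_mem_edgeToRoot hp
        rw [intervalVec, if_neg (by omega)]

theorem linearIndependent_intervalVec_restrict {m : ℕ} (T : PlaneBinaryTree) (hT : T.ic = m + 1) :
    LinearIndependent K (fun p : T.pairs 0 => fun t : Fin m => intervalVec K p (t + 1)) := by
  let s : Fin m → ℕ := fun t => t + 1
  have hs : Function.Injective s := fun _ _ h => Fin.ext (Nat.succ_injective h)
  -- extending by zero along `s` loses nothing, as every interval lies inside `[1, m]`
  have hextend : ⇑(Function.ExtendByZero.linearMap K s) ∘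
      (fun (p : T.pairs 0) (t : Fin m) => intervalVec K p (s t)) =
      fun p : T.pairs 0 => intervalVec K p := by
    funext p x
    rw [Function.comp_apply, Function.ExtendByZero.linearMap_apply]
    by_cases hx : ∃ t, s t = x
    · obtain ⟨t, rfl⟩ := hx
      exact hs.extend_apply _ _ t
    · rw [Function.extend_apply' _ _ _ hx]
      refine (intervalVec_eq_zero_of_mem_pairs p.2 ?_).symm
      by_contra!
      exact hx ⟨⟨x - 1, by omega⟩, by simp only [s]; omega⟩
  refine .of_comp (Function.ExtendByZero.linearMap K s) ?_
  rw [hextend]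
  exact linearIndepOn_intervalVec_pairs T 0

end IntervalVec

end PlaneBinaryTree

/-- For `n ≥ 3`, the Stanley–Pitman construction yields exactly
`c_{n-2} = (1/(n-1))·binomial(2(n-2), n-2)` maximal cones in `ℝ^{n-3}`, one for
each plane binary tree with `n−1` leaves, and each cone is simplicial: it is
cut out by exactly `n−3` inequalities whose linear functionals (recorded by
their coefficient vectors, the indicator vectors of the intervals
`[min(i,j), max(i,j)−1]`) are linearly independent. -/
theorem stanleyPitman_catalan_count_and_simplicial (n : ℕ) (hn : 3 ≤ n) :
    Nat.card {T : PlaneBinaryTree // T.leaves = n - 1} = catalan (n - 2) ∧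
    catalan (n - 2) = (2 * (n - 2)).choose (n - 2) / (n - 1) ∧
    ∀ T : PlaneBinaryTree, T.leaves = n - 1 →
      (T.pairs 0).card = n - 3 ∧
      LinearIndependent ℝ (fun p : (T.pairs 0 : Finset (ℕ × ℕ)) =>
        (fun t : Fin (n - 3) =>
          if min p.1.1 p.1.2 ≤ t.val + 1 ∧ t.val + 1 < max p.1.1 p.1.2
          then (1 : ℝ) else 0)) := by
  obtain ⟨m, rfl⟩ : ∃ m, n = m + 3 := ⟨n - 3, by omega⟩
  refine ⟨PlaneBinaryTree.card_leaves_eq_catalan (m + 1), ?_, fun T hT => ?_⟩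
  · rw [catalan_eq_centralBinom_div, Nat.centralBinom_eq_two_mul_choose]
    rfl
  · have hic : T.ic = m + 1 := by rw [T.leaves_eq_ic_add_one] at hT; omega
    exact ⟨by rw [T.card_pairs 0, hic]; rfl, T.linearIndependent_intervalVec_restrict hic⟩
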